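/- arXiv:1507.00135 — 2 statements merged into one kernel-verified Lean document; each statement's English description precedes it below -/
import Mathlib

section
/- Let G be an irreducible subgroup of PL_o([a,c]), where a < c. If the quotient G/(ker σ_ℓ · ker σ_r) is a torsion group (for every g ∈ G there is n ≥ 1 with g^n ∈ (ker σ_ℓ)·(ker σ_r), kernels taken in G), then G is not abelian. -/
open Set

/-- A map `g : ℝ → ℝ` is *finitary piecewise linear* if there is a finite set of
breakpoints outside of which `g` is locally affine. -/
def IsFinitaryPL (g : ℝ → ℝ) : Prop :=
  ∃ B : Finset ℝ, ∀ t : ℝ, t ∉ B →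
    ∃ m b : ℝ, ∃ ε : ℝ, 0 < ε ∧ ∀ u : ℝ, |u - t| < ε → g u = m * u + b

/-- The support of a map of the real line. -/
def suppOf (g : ℝ → ℝ) : Set ℝ := {t : ℝ | g t ≠ t}

/-- `PLo I` is the set of orientation-preserving (i.e. strictly increasing) finitary
piecewise linear homeomorphisms of `ℝ` with support contained in `I`. -/
def PLo (I : Set ℝ) : Set (Equiv.Perm ℝ) :=
  {g : Equiv.Perm ℝ | StrictMono ⇑g ∧ IsFinitaryPL ⇑g ∧ suppOf ⇑g ⊆ I}

/-- The right derivative of `g` at `a`. -/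
noncomputable def rightSlope (g : ℝ → ℝ) (a : ℝ) : ℝ := derivWithin g (Ici a) a

/-- The left derivative of `g` at `c`. -/
noncomputable def leftSlope (g : ℝ → ℝ) (c : ℝ) : ℝ := derivWithin g (Iic c) c

/-- The amplitude of the translation with which `g` coincides near `+∞`. -/
noncomputable def amplTop (g : ℝ → ℝ) : ℝ :=
  Filter.limUnder Filter.atTop (fun t => g t - t)

/-- The amplitude of the translation with which `g` coincides near `-∞`. -/
noncomputable def amplBot (g : ℝ → ℝ) : ℝ :=
  Filter.limUnder Filter.atBot (fun t => g t - t)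

/-- A character of a group is a homomorphism into `(ℝ, +)`. -/
def IsChar {Γ : Type*} [Group Γ] (χ : Γ → ℝ) : Prop :=
  ∀ g h : Γ, χ (g * h) = χ g + χ h

/-- Two characters lie on the same ray: `ψ` is a positive multiple of `χ`. -/
def SameRayChar {Γ : Type*} (χ ψ : Γ → ℝ) : Prop :=
  ∃ r : ℝ, 0 < r ∧ ∀ g : Γ, ψ g = r * χ g

/-- The subgraph `Γ(G, X)_χ` of the Cayley graph of `G` with respect to the generating
set `X`, spanned by the vertices `g` with `χ g ≥ 0`, is connected. -/
def CayleyConnected {Γ : Type*} [Group Γ] (X : Set Γ) (χ : Γ → ℝ) : Prop :=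
  ∀ g h : Γ, 0 ≤ χ g → 0 ≤ χ h →
    Relation.ReflTransGen
      (fun u v : Γ => 0 ≤ χ u ∧ 0 ≤ χ v ∧ ∃ x ∈ X, v = u * x ∨ u = v * x) g h

/-- `[χ] ∈ Σ¹(G)`: for every generating set `X` of `G` the subgraph `Γ(G,X)_χ`
of the Cayley graph is connected. -/
def MemSigma1 {Γ : Type*} [Group Γ] (χ : Γ → ℝ) : Prop :=
  ∀ X : Set Γ, Subgroup.closure X = ⊤ → CayleyConnected X χ

/-- The character `χ_ℓ = ln ∘ σ_ℓ` of a subgroup `G` of `PL_o([a,c])`. -/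
noncomputable def chiL (G : Subgroup (Equiv.Perm ℝ)) (a : ℝ) : G → ℝ :=
  fun g => Real.log (rightSlope (⇑(g : Equiv.Perm ℝ)) a)

/-- The character `χ_r = ln ∘ σ_r` of a subgroup `G` of `PL_o([a,c])`. -/
noncomputable def chiR (G : Subgroup (Equiv.Perm ℝ)) (c : ℝ) : G → ℝ :=
  fun g => Real.log (leftSlope (⇑(g : Equiv.Perm ℝ)) c)

open Filter Topology

/-!
If `G` is abelian, every `w ∈ G` commutes with `G`, so `G` permutes the support of `w` and hence
fixes its infimum and supremum; by irreducibility these are `a` and `c` unless `w = 1`. If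
`σ_ℓ(w) = 1`, then `w`, being PL and fixing `a`, is the identity on a right neighbourhood of `a`,
so its support starts strictly after `a` and `w = 1`; likewise `ker σ_r` is trivial. The torsion
hypothesis then gives every element of `G` finite order, and an increasing bijection of `ℝ` of
finite order is the identity. So `G` is trivial, which contradicts irreducibility.
-/

lemma Equiv.Perm.eq_one_of_pow_eq_one_of_monotone {α : Type*} [LinearOrder α]
    {g : Equiv.Perm α} (hg : Monotone g) {n : ℕ} (hn : 0 < n) (h : g ^ n = 1) : g = 1 := by
  ext t
  have hfix : (⇑g)^[n] t = id^[n] t := by rw [← Equiv.Perm.coe_pow, h, Function.iterate_id]; rfl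
  exact (Function.Commute.id_right.iterate_pos_eq_iff_map_eq hg strictMono_id hn).1 hfix

lemma hasDerivAt_affine (m b t : ℝ) : HasDerivAt (fun u => m * u + b) m t := by
  simpa using ((hasDerivAt_id t).const_mul m).add_const b

lemma IsOpen.exists_eqOn_affine_of_eventuallyEq_affine {f : ℝ → ℝ} {s : Set ℝ} (hs : IsOpen s)
    (hs' : IsPreconnected s) (hf : ∀ t ∈ s, ∃ m b : ℝ, f =ᶠ[𝓝 t] fun u => m * u + b) :
    ∃ m b : ℝ, Set.EqOn f (fun u => m * u + b) s := by
  have hderiv : ∀ t ∈ s, ∃ m : ℝ, HasDerivAt f m t ∧ deriv f =ᶠ[𝓝 t] fun _ => m := by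
    intro t ht
    obtain ⟨m, b, hfmb⟩ := hf t ht
    refine ⟨m, (hasDerivAt_affine m b t).congr_of_eventuallyEq hfmb, ?_⟩
    filter_upwards [hfmb.eventuallyEq_nhds] with u hu
    exact ((hasDerivAt_affine m b u).congr_of_eventuallyEq hu).deriv
  have hdiff : DifferentiableOn ℝ f s := fun t ht =>
    let ⟨_, hm, _⟩ := hderiv t ht; hm.differentiableAt.differentiableWithinAt
  have hdiff' : DifferentiableOn ℝ (deriv f) s := fun t ht =>
    let ⟨_, _, hd⟩ := hderiv t ht
    ((hasDerivAt_const t _).congr_of_eventuallyEq hd).differentiableAt.differentiableWithinAt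
  obtain ⟨m, hm⟩ := hs.exists_is_const_of_deriv_eq_zero hs' hdiff' fun t ht => by
    obtain ⟨_, _, hd⟩ := hderiv t ht
    simpa using ((hasDerivAt_const t _).congr_of_eventuallyEq hd).deriv
  obtain ⟨b, hb⟩ := hs.exists_eq_add_of_deriv_eq hs' hdiff
    ((differentiable_id.const_mul m).differentiableOn) fun t ht => by simp [hm t ht]
  exact ⟨m, b, hb⟩

lemma IsFinitaryPL.eventually_cofinite_eventuallyEq_affine {g : ℝ → ℝ} (hg : IsFinitaryPL g) :
    ∀ᶠ t in cofinite, ∃ m b : ℝ, g =ᶠ[𝓝 t] fun u => m * u + b := by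
  obtain ⟨B, hB⟩ := hg
  filter_upwards [B.eventually_cofinite_notMem] with t ht
  obtain ⟨m, b, ε, hε, hmb⟩ := hB t ht
  exact ⟨m, b, Metric.eventually_nhds_iff.2 ⟨ε, hε, fun u hu => hmb u (Real.dist_eq u t ▸ hu)⟩⟩

lemma IsFinitaryPL.exists_eventuallyEq_affine_nhdsGE {g : ℝ → ℝ} (hg : IsFinitaryPL g)
    (hc : Continuous g) (a : ℝ) : ∃ m b : ℝ, g =ᶠ[𝓝[≥] a] fun u => m * u + b := by
  obtain ⟨u, hau : a < u, hu⟩ := mem_nhdsGT_iff_exists_Ioo_subset.1 <| nhdsWithin_mono a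
    (fun t ht => ne_of_gt ht) (nhdsNE_le_cofinite a hg.eventually_cofinite_eventuallyEq_affine)
  obtain ⟨m, b, hmb⟩ := isOpen_Ioo.exists_eqOn_affine_of_eventuallyEq_affine isPreconnected_Ioo hu
  refine ⟨m, b, eventuallyEq_of_mem (Icc_mem_nhdsGE hau) ?_⟩
  simpa [closure_Ioo hau.ne] using hmb.closure hc (by fun_prop)

lemma IsFinitaryPL.exists_eventuallyEq_affine_nhdsLE {g : ℝ → ℝ} (hg : IsFinitaryPL g)
    (hc : Continuous g) (c : ℝ) : ∃ m b : ℝ, g =ᶠ[𝓝[≤] c] fun u => m * u + b := by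
  obtain ⟨l, hlc : l < c, hl⟩ := mem_nhdsLT_iff_exists_Ioo_subset.1 <| nhdsWithin_mono c
    (fun t ht => ne_of_lt ht) (nhdsNE_le_cofinite c hg.eventually_cofinite_eventuallyEq_affine)
  obtain ⟨m, b, hmb⟩ := isOpen_Ioo.exists_eqOn_affine_of_eventuallyEq_affine isPreconnected_Ioo hl
  refine ⟨m, b, eventuallyEq_of_mem (Icc_mem_nhdsLE hlc) ?_⟩
  simpa [closure_Ioo hlc.ne] using hmb.closure hc (by fun_prop)

lemma eventuallyEq_id_nhdsGE_of_rightSlope_eq_one {g : ℝ → ℝ} (hg : IsFinitaryPL g)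
    (hcont : Continuous g) {a : ℝ} (ha : g a = a) (h1 : rightSlope g a = 1) :
    g =ᶠ[𝓝[≥] a] id := by
  obtain ⟨m, b, hmb⟩ := hg.exists_eventuallyEq_affine_nhdsGE hcont a
  have hmba := hmb.eq_of_nhdsWithin self_mem_Ici
  have hm : m = 1 := by
    rw [← h1, rightSlope, hmb.derivWithin_eq hmba,
      (hasDerivAt_affine m b a).hasDerivWithinAt.derivWithin (uniqueDiffOn_Ici a a self_mem_Ici)]
  have hb : b = 0 := by rw [ha, hm] at hmba; linarith
  filter_upwards [hmb] with t ht
  simp [ht, hm, hb]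

lemma eventuallyEq_id_nhdsLE_of_leftSlope_eq_one {g : ℝ → ℝ} (hg : IsFinitaryPL g)
    (hcont : Continuous g) {c : ℝ} (hc : g c = c) (h1 : leftSlope g c = 1) :
    g =ᶠ[𝓝[≤] c] id := by
  obtain ⟨m, b, hmb⟩ := hg.exists_eventuallyEq_affine_nhdsLE hcont c
  have hmbc := hmb.eq_of_nhdsWithin self_mem_Iic
  have hm : m = 1 := by
    rw [← h1, leftSlope, hmb.derivWithin_eq hmbc,
      (hasDerivAt_affine m b c).hasDerivWithinAt.derivWithin (uniqueDiffOn_Iic c c self_mem_Iic)]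
  have hb : b = 0 := by rw [hc, hm] at hmbc; linarith
  filter_upwards [hmb] with t ht
  simp [ht, hm, hb]

lemma suppOf_nonempty {g : Equiv.Perm ℝ} (hg : g ≠ 1) : (suppOf g).Nonempty := by
  by_contra! h
  exact hg (Equiv.ext fun t => by by_contra ht; exact h.subset ht)

lemma image_suppOf_of_commute {g h : Equiv.Perm ℝ} (hgh : Commute g h) :
    h '' suppOf g = suppOf g := by
  ext t
  have hcomm : g (h⁻¹ t) = h⁻¹ (g t) := by
    rw [← Equiv.Perm.mul_apply, hgh.inv_right.eq, Equiv.Perm.mul_apply]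
  rw [Equiv.image_eq_preimage_symm]
  change g (h⁻¹ t) ≠ h⁻¹ t ↔ g t ≠ t
  rw [hcomm, h⁻¹.injective.ne_iff]

lemma apply_sInf_suppOf_of_commute {g h : Equiv.Perm ℝ} (hh : StrictMono h) (hgh : Commute g h)
    (hne : (suppOf g).Nonempty) (hbdd : BddBelow (suppOf g)) :
    h (sInf (suppOf g)) = sInf (suppOf g) := by
  have := (hh.orderIsoOfSurjective h h.surjective).map_csInf' hne hbdd
  rwa [StrictMono.coe_orderIsoOfSurjective, image_suppOf_of_commute hgh] at this

lemma apply_sSup_suppOf_of_commute {g h : Equiv.Perm ℝ} (hh : StrictMono h) (hgh : Commute g h)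
    (hne : (suppOf g).Nonempty) (hbdd : BddAbove (suppOf g)) :
    h (sSup (suppOf g)) = sSup (suppOf g) := by
  have := (hh.orderIsoOfSurjective h h.surjective).map_csSup' hne hbdd
  rwa [StrictMono.coe_orderIsoOfSurjective, image_suppOf_of_commute hgh] at this

lemma continuous_of_mem_PLo {I : Set ℝ} {g : Equiv.Perm ℝ} (hg : g ∈ PLo I) : Continuous g :=
  hg.1.monotone.continuous_of_surjective g.surjective

lemma suppOf_subset_Ioo_of_mem_PLo {a c : ℝ} {g : Equiv.Perm ℝ} (hg : g ∈ PLo (Icc a c)) :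
    suppOf g ⊆ Ioo a c := by
  rw [← interior_Icc]
  exact (isOpen_ne_fun (continuous_of_mem_PLo hg) continuous_id).subset_interior_iff.2 hg.2.2

lemma sInf_suppOf_eq_of_forall_commute {a c : ℝ} {G : Set (Equiv.Perm ℝ)}
    (hG : ∀ g ∈ G, StrictMono g) (hirr : ∀ t : ℝ, a < t → t < c → ∃ g ∈ G, g t ≠ t)
    {w : Equiv.Perm ℝ} (hw : w ∈ PLo (Icc a c)) (hcomm : ∀ g ∈ G, Commute w g)
    (hw1 : w ≠ 1) : sInf (suppOf w) = a := by
  have hsupp := suppOf_subset_Ioo_of_mem_PLo hw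
  obtain ⟨t, ht⟩ := suppOf_nonempty hw1
  have hbdd : BddBelow (suppOf w) := ⟨a, fun s hs => (hsupp hs).1.le⟩
  refine le_antisymm ?_ (le_csInf ⟨t, ht⟩ fun s hs => (hsupp hs).1.le)
  by_contra! has
  obtain ⟨h, hh, hmoves⟩ := hirr _ has ((csInf_le hbdd ht).trans_lt (hsupp ht).2)
  exact hmoves (apply_sInf_suppOf_of_commute (hG h hh) (hcomm h hh) ⟨t, ht⟩ hbdd)

lemma sSup_suppOf_eq_of_forall_commute {a c : ℝ} {G : Set (Equiv.Perm ℝ)}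
    (hG : ∀ g ∈ G, StrictMono g) (hirr : ∀ t : ℝ, a < t → t < c → ∃ g ∈ G, g t ≠ t)
    {w : Equiv.Perm ℝ} (hw : w ∈ PLo (Icc a c)) (hcomm : ∀ g ∈ G, Commute w g)
    (hw1 : w ≠ 1) : sSup (suppOf w) = c := by
  have hsupp := suppOf_subset_Ioo_of_mem_PLo hw
  obtain ⟨t, ht⟩ := suppOf_nonempty hw1
  have hbdd : BddAbove (suppOf w) := ⟨c, fun s hs => (hsupp hs).2.le⟩
  refine le_antisymm (csSup_le ⟨t, ht⟩ fun s hs => (hsupp hs).2.le) ?_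
  by_contra! hsc
  obtain ⟨h, hh, hmoves⟩ := hirr _ ((hsupp ht).1.trans_le (le_csSup hbdd ht)) hsc
  exact hmoves (apply_sSup_suppOf_of_commute (hG h hh) (hcomm h hh) ⟨t, ht⟩ hbdd)

lemma eq_one_of_rightSlope_eq_one {a c : ℝ} {G : Set (Equiv.Perm ℝ)}
    (hG : ∀ g ∈ G, StrictMono g) (hirr : ∀ t : ℝ, a < t → t < c → ∃ g ∈ G, g t ≠ t)
    {w : Equiv.Perm ℝ} (hw : w ∈ PLo (Icc a c)) (hcomm : ∀ g ∈ G, Commute w g)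
    (h1 : rightSlope w a = 1) : w = 1 := by
  by_contra hw1
  have hsupp := suppOf_subset_Ioo_of_mem_PLo hw
  have hwa : w a = a := by_contra fun h => lt_irrefl a (hsupp h).1
  obtain ⟨u, hau : a < u, hu⟩ := mem_nhdsGE_iff_exists_Ico_subset.1 <|
    eventuallyEq_id_nhdsGE_of_rightSlope_eq_one hw.2.1 (continuous_of_mem_PLo hw) hwa h1
  have hub : u ≤ sInf (suppOf w) := le_csInf (suppOf_nonempty hw1) fun t ht => by
    by_contra! htu
    exact ht (hu ⟨(hsupp ht).1.le, htu⟩)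
  rw [sInf_suppOf_eq_of_forall_commute hG hirr hw hcomm hw1] at hub
  exact hau.not_ge hub

lemma eq_one_of_leftSlope_eq_one {a c : ℝ} {G : Set (Equiv.Perm ℝ)}
    (hG : ∀ g ∈ G, StrictMono g) (hirr : ∀ t : ℝ, a < t → t < c → ∃ g ∈ G, g t ≠ t)
    {w : Equiv.Perm ℝ} (hw : w ∈ PLo (Icc a c)) (hcomm : ∀ g ∈ G, Commute w g)
    (h1 : leftSlope w c = 1) : w = 1 := by
  by_contra hw1
  have hsupp := suppOf_subset_Ioo_of_mem_PLo hw
  have hwc : w c = c := by_contra fun h => lt_irrefl c (hsupp h).2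
  obtain ⟨l, hlc : l < c, hl⟩ := mem_nhdsLE_iff_exists_Ioc_subset.1 <|
    eventuallyEq_id_nhdsLE_of_leftSlope_eq_one hw.2.1 (continuous_of_mem_PLo hw) hwc h1
  have hlb : sSup (suppOf w) ≤ l := csSup_le (suppOf_nonempty hw1) fun t ht => by
    by_contra! hlt
    exact ht (hl ⟨hlt, (hsupp ht).2.le⟩)
  rw [sSup_suppOf_eq_of_forall_commute hG hirr hw hcomm hw1] at hlb
  exact hlc.not_ge hlb

/-- **Lemma (Statement 10).** If `G ≤ PL_o([a,c])` is irreducible and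
`G/(ker σ_ℓ · ker σ_r)` is a torsion group, then `G` is not abelian. -/
theorem not_abelian_of_torsion_quotient
    (a c : ℝ) (hac : a < c)
    (G : Subgroup (Equiv.Perm ℝ)) (hG : (G : Set (Equiv.Perm ℝ)) ⊆ PLo (Icc a c))
    (hirr : ∀ t : ℝ, a < t → t < c → ∃ g ∈ G, g t ≠ t)
    (htor : ∀ g : G, ∃ n : ℕ, 1 ≤ n ∧ ∃ u v : G,
        rightSlope (⇑(u : Equiv.Perm ℝ)) a = 1 ∧
        leftSlope (⇑(v : Equiv.Perm ℝ)) c = 1 ∧ g ^ n = u * v) :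
    ¬ (∀ g ∈ G, ∀ h ∈ G, g * h = h * g) := by
  intro habel
  have hmono : ∀ g ∈ G, StrictMono g := fun g hg => (hG hg).1
  have htriv : ∀ g ∈ G, g = 1 := by
    intro g hg
    obtain ⟨n, hn, u, v, hu, hv, hguv⟩ := htor ⟨g, hg⟩
    have hu1 := eq_one_of_rightSlope_eq_one hmono hirr (hG u.2) (habel u u.2) hu
    have hv1 := eq_one_of_leftSlope_eq_one hmono hirr (hG v.2) (habel v v.2) hv
    have hgn : g ^ n = 1 := by simpa [hu1, hv1] using congrArg Subtype.val hguv
    exact Equiv.Perm.eq_one_of_pow_eq_one_of_monotone (hmono g hg).monotone hn hgn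
  obtain ⟨g, hg, hmoves⟩ := hirr ((a + c) / 2) (by linarith) (by linarith)
  exact hmoves (by rw [htriv g hg]; rfl)
end

section
/- Let {G_i : i ∈ I} be a family of groups and let G = ⨁_{i∈I} G_i be their restricted direct product (the subgroup of the full product consisting of families with all but finitely many coordinates equal to the identity). For each i ∈ I let π_i : G → G_i denote the canonical projection, and let π_i^* : S(G_i) → S(G) be the induced embedding [χ̄] ↦ [χ̄ ∘ π_i]. Then Σ¹(G)^c = ⋃_{i∈I} π_i^*(Σ¹(G_i)^c); that is, a non-zero character χ : G → ℝ represents a point of the complement of Σ¹(G) if and only if there exist an index i ∈ I and a non-zero character χ̄ : G_i → ℝ with [χ̄] ∉ Σ¹(G_i) and [χ] = [χ̄ ∘ π_i]. -/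
open Set

/-- The restricted direct product of a family of groups: the subgroup of the full
product consisting of families with all but finitely many coordinates trivial. -/
def restrictedProd {ι : Type*} (Gi : ι → Type*) [∀ i, Group (Gi i)] :
    Subgroup (∀ i, Gi i) where
  carrier := {g : ∀ i, Gi i | {i : ι | g i ≠ 1}.Finite}
  one_mem' := by
    have : {i : ι | (1 : ∀ i, Gi i) i ≠ 1} = ∅ := by
      ext i; simp
    simp only [Set.mem_setOf_eq, this]
    exact Set.finite_empty
  mul_mem' := by
    intro f g hf hg
    apply (Set.Finite.union hf hg).subset
    intro i hi
    simp only [Set.mem_setOf_eq, Pi.mul_apply] at hi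
    by_contra hmem
    simp only [Set.mem_union, Set.mem_setOf_eq, not_or, not_not] at hmem
    exact hi (by rw [hmem.1, hmem.2, one_mul])
  inv_mem' := by
    intro f hf
    apply Set.Finite.subset hf
    intro i hi
    simp only [Set.mem_setOf_eq, Pi.inv_apply, ne_eq] at hi ⊢
    intro h
    exact hi (by rw [h, inv_one])

/-!
Let `K = ker π_i`, so that `G = K × G_i`. For a generating set `Y` of `G`, if `χ z > 0` then some
conjugate of `z` is joined to `1` in `Γ(G, Y)_χ`; hence every normal subgroup on which `χ` is
non-zero contains an element `m` joined to `1` with `χ m > 0`. If `m` commutes with `t`, one walks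
from `u` to `u t` inside `Γ(G, Y)_χ` by climbing to `u mⁿ`, reading a word for `t` far above the
level `0`, and descending from `u mⁿ t = u t mⁿ` to `u t`.

Choose `i` with `χ` non-zero on `G_i`. If `χ` is non-zero on `K` as well, this joins every vertex
to `1`, so `[χ] ∈ Σ¹(G)`. Otherwise `χ = χ̄ ∘ π_i`, all of `K` is joined to `1`, and paths in
`Γ(G_i, X̄)_χ̄`, where `X̄` is the image of the component of `1`, lift to `Γ(G, Y)_χ`; so
`[χ̄] ∈ Σ¹(G_i)` gives `[χ] ∈ Σ¹(G)`. Conversely, a generating set of `G_i` witnessing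
`[χ̄] ∉ Σ¹(G_i)`, enlarged by `K`, witnesses `[χ̄ ∘ π_i] ∉ Σ¹(G)`.
-/

open Subgroup

section

variable {G H : Type*} [Group G] [Group H]

namespace IsChar

variable {χ : G → ℝ}

theorem map_one (hχ : IsChar χ) : χ 1 = 0 := by
  have := hχ 1 1
  rw [one_mul] at this
  linarith

theorem map_inv (hχ : IsChar χ) (g : G) : χ g⁻¹ = -χ g := by
  have := hχ g⁻¹ g
  rw [inv_mul_cancel, hχ.map_one] at this
  linarith

theorem map_pow (hχ : IsChar χ) (g : G) (n : ℕ) : χ (g ^ n) = n * χ g := by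
  induction n with
  | zero => simp [hχ.map_one]
  | succ n ih => rw [pow_succ, hχ, ih]; push_cast; ring

theorem map_conj (hχ : IsChar χ) (h z : G) : χ (h * z * h⁻¹) = χ z := by
  rw [hχ, hχ, hχ.map_inv]; ring

theorem comp {χ' : H → ℝ} (hχ' : IsChar χ') (π : G →* H) : IsChar (χ' ∘ π) :=
  fun g h => by simp only [Function.comp_apply, map_mul]; exact hχ' _ _

theorem eq_zero_of_closure_eq_top (hχ : IsChar χ) {X : Set G} (hX : closure X = ⊤)
    (h : ∀ x ∈ X, χ x = 0) : χ = 0 := by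
  funext g
  show χ g = 0
  induction (hX ▸ mem_top g : g ∈ closure X) using closure_induction with
  | mem x hx => exact h x hx
  | one => exact hχ.map_one
  | mul a b _ _ ha hb => rw [hχ, ha, hb, add_zero]
  | inv a _ ha => rw [hχ.map_inv, ha, neg_zero]

end IsChar

theorem SameRayChar.nonneg_iff {Γ : Type*} {χ ψ : Γ → ℝ} (h : SameRayChar χ ψ) (g : Γ) :
    0 ≤ χ g ↔ 0 ≤ ψ g := by
  obtain ⟨r, hr, hψ⟩ := h
  rw [hψ, mul_nonneg_iff_of_pos_left hr]

theorem memSigma1_congr {χ ψ : G → ℝ} (h : ∀ g, 0 ≤ χ g ↔ 0 ≤ ψ g) :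
    MemSigma1 χ ↔ MemSigma1 ψ := by
  simp only [MemSigma1, CayleyConnected, h]

def CayleyAdj (Y : Set G) (χ : G → ℝ) (u v : G) : Prop :=
  0 ≤ χ u ∧ 0 ≤ χ v ∧ ∃ x ∈ Y, v = u * x ∨ u = v * x

abbrev CayleyJoined (Y : Set G) (χ : G → ℝ) : G → G → Prop :=
  Relation.ReflTransGen (CayleyAdj Y χ)

section CayleyJoined

variable {Y : Set G} {χ : G → ℝ}

theorem cayleyAdj_comm {u v : G} : CayleyAdj Y χ u v ↔ CayleyAdj Y χ v u := by
  constructor <;> rintro ⟨hu, hv, x, hx, h⟩ <;> exact ⟨hv, hu, x, hx, h.symm⟩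

theorem cayleyAdj_mul {u x : G} (hx : x ∈ Y) (hu : 0 ≤ χ u) (hux : 0 ≤ χ (u * x)) :
    CayleyAdj Y χ u (u * x) :=
  ⟨hu, hux, x, hx, Or.inl rfl⟩

theorem cayleyAdj_mul_inv {u x : G} (hx : x ∈ Y) (hu : 0 ≤ χ u) (hux : 0 ≤ χ (u * x⁻¹)) :
    CayleyAdj Y χ u (u * x⁻¹) :=
  ⟨hu, hux, x, hx, Or.inr (inv_mul_cancel_right u x).symm⟩

theorem CayleyJoined.symm {u v : G} (h : CayleyJoined Y χ u v) : CayleyJoined Y χ v u :=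
  Relation.ReflTransGen.mono (fun _ _ => cayleyAdj_comm.mp) _ _
    (Relation.reflTransGen_swap.mpr h)

theorem memSigma1_of_cayleyJoined_one
    (h : ∀ Y : Set G, closure Y = ⊤ → ∀ g, 0 ≤ χ g → CayleyJoined Y χ 1 g) : MemSigma1 χ :=
  fun Y hY g g' hg hg' => (h Y hY g hg).symm.trans (h Y hY g' hg')

theorem CayleyJoined.mul_left (hχ : IsChar χ) {t u v : G} (ht : 0 ≤ χ t)
    (h : CayleyJoined Y χ u v) : CayleyJoined Y χ (t * u) (t * v) := by
  refine Relation.ReflTransGen.lift (t * ·) (fun a b ⟨ha, hb, x, hx, hab⟩ => ?_) _ _ h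
  refine ⟨by rw [hχ]; linarith, by rw [hχ]; linarith, x, hx, ?_⟩
  rcases hab with rfl | rfl <;> simp [mul_assoc]

theorem cayleyJoined_self_mul (hχ : IsChar χ) {m u : G} (hm : CayleyJoined Y χ 1 m)
    (hu : 0 ≤ χ u) : CayleyJoined Y χ u (u * m) := by
  simpa using hm.mul_left hχ hu

theorem cayleyJoined_self_mul_pow (hχ : IsChar χ) {m u : G} (hm : CayleyJoined Y χ 1 m)
    (hm₀ : 0 ≤ χ m) (hu : 0 ≤ χ u) (n : ℕ) : CayleyJoined Y χ u (u * m ^ n) := by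
  induction n with
  | zero => simpa using Relation.ReflTransGen.refl
  | succ n ih =>
    rw [pow_succ, ← mul_assoc]
    exact ih.trans (cayleyJoined_self_mul hχ hm (by rw [hχ, hχ.map_pow]; positivity))

theorem exists_cayleyJoined_self_mul (hχ : IsChar χ) (hY : closure Y = ⊤) (w : G) :
    ∃ N, ∀ u, N ≤ χ u → CayleyJoined Y χ u (u * w) := by
  induction (hY ▸ mem_top w : w ∈ closure Y) using closure_induction with
  | mem x hx =>
    refine ⟨max 0 (-χ x), fun u hu => .single (cayleyAdj_mul hx (le_of_max_le_left hu) ?_)⟩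
    rw [hχ]
    linarith [le_of_max_le_right hu]
  | one => exact ⟨0, fun u _ => by simpa using .refl⟩
  | mul a b _ _ ha hb =>
    obtain ⟨Na, ha⟩ := ha
    obtain ⟨Nb, hb⟩ := hb
    refine ⟨max Na (Nb - χ a), fun u hu => ?_⟩
    rw [← mul_assoc]
    refine (ha u (le_of_max_le_left hu)).trans (hb _ ?_)
    rw [hχ]
    linarith [le_of_max_le_right hu]
  | inv a _ ha =>
    obtain ⟨Na, ha⟩ := ha
    refine ⟨Na + χ a, fun u hu => ?_⟩
    simpa using (ha (u * a⁻¹) (by rw [hχ, hχ.map_inv]; linarith)).symm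

theorem exists_cayleyJoined_one_pos (hχ : IsChar χ) (hY : closure Y = ⊤) (hne : χ ≠ 0) :
    ∃ ℓ, CayleyJoined Y χ 1 ℓ ∧ 0 < χ ℓ := by
  obtain ⟨y, hy, hy₀⟩ : ∃ y ∈ Y, χ y ≠ 0 := by
    by_contra! h
    exact hne (hχ.eq_zero_of_closure_eq_top hY h)
  rcases hy₀.lt_or_gt with hneg | hpos
  · have hpos : 0 < χ y⁻¹ := by rw [hχ.map_inv]; linarith
    have hadj : CayleyAdj Y χ 1 (1 * y⁻¹) :=
      cayleyAdj_mul_inv hy hχ.map_one.ge (by rw [one_mul]; exact hpos.le)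
    rw [one_mul] at hadj
    exact ⟨y⁻¹, Relation.ReflTransGen.single hadj, hpos⟩
  · have hadj : CayleyAdj Y χ 1 (1 * y) :=
      cayleyAdj_mul hy hχ.map_one.ge (by rw [one_mul]; exact hpos.le)
    rw [one_mul] at hadj
    exact ⟨y, Relation.ReflTransGen.single hadj, hpos⟩

/-- Climb along powers of a positive vertex `ℓ` joined to `1` until a word for `z` can be read,
then descend from `ℓⁿ z` to `ℓⁿ z ℓ⁻ⁿ` along the same powers. -/
theorem exists_cayleyJoined_one_conj (hχ : IsChar χ) (hY : closure Y = ⊤) {z : G}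
    (hz : 0 < χ z) : ∃ h, CayleyJoined Y χ 1 (h * z * h⁻¹) := by
  obtain ⟨ℓ, hℓ, hℓpos⟩ := exists_cayleyJoined_one_pos hχ hY fun h₀ => hz.ne' (congrFun h₀ z)
  obtain ⟨N, hN⟩ := exists_cayleyJoined_self_mul hχ hY z
  obtain ⟨n, hn⟩ := exists_nat_ge (N / χ ℓ)
  have hhigh : N ≤ χ (1 * ℓ ^ n) := by
    rw [one_mul, hχ.map_pow]
    rwa [div_le_iff₀ hℓpos] at hn
  have hup : CayleyJoined Y χ 1 (ℓ ^ n * z) := by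
    simpa using (cayleyJoined_self_mul_pow hχ hℓ hℓpos.le hχ.map_one.ge n).trans (hN _ hhigh)
  have hdown : CayleyJoined Y χ (ℓ ^ n * z * (ℓ ^ n)⁻¹) (ℓ ^ n * z) := by
    simpa using cayleyJoined_self_mul_pow hχ hℓ hℓpos.le
      (u := ℓ ^ n * z * (ℓ ^ n)⁻¹) (by rw [hχ.map_conj]; exact hz.le) n
  exact ⟨ℓ ^ n, hup.trans hdown.symm⟩

theorem exists_mem_cayleyJoined_one_pos (hχ : IsChar χ) (hY : closure Y = ⊤)
    {N : Subgroup G} [N.Normal] (hN : ∃ z ∈ N, χ z ≠ 0) :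
    ∃ m ∈ N, CayleyJoined Y χ 1 m ∧ 0 < χ m := by
  obtain ⟨z, hzN, hz⟩ : ∃ z ∈ N, 0 < χ z := by
    obtain ⟨z, hzN, hz₀⟩ := hN
    rcases hz₀.lt_or_gt with hneg | hpos
    · exact ⟨z⁻¹, N.inv_mem hzN, by rw [hχ.map_inv]; linarith⟩
    · exact ⟨z, hzN, hpos⟩
  obtain ⟨h, hh⟩ := exists_cayleyJoined_one_conj hχ hY hz
  exact ⟨h * z * h⁻¹, ‹N.Normal›.conj_mem z hzN h, hh, by rwa [hχ.map_conj]⟩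

theorem cayleyJoined_mul_of_commute (hχ : IsChar χ) (hY : closure Y = ⊤) {m t u : G}
    (hm : CayleyJoined Y χ 1 m) (hmpos : 0 < χ m) (hmt : Commute m t) (hu : 0 ≤ χ u)
    (hut : 0 ≤ χ (u * t)) : CayleyJoined Y χ u (u * t) := by
  obtain ⟨N, hN⟩ := exists_cayleyJoined_self_mul hχ hY t
  obtain ⟨n, hn⟩ := exists_nat_ge ((N - χ u) / χ m)
  have hhigh : N ≤ χ (u * m ^ n) := by
    rw [hχ, hχ.map_pow]
    rw [div_le_iff₀ hmpos] at hn
    linarith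
  have hswap : u * m ^ n * t = u * t * m ^ n := by
    rw [mul_assoc, (hmt.pow_left n).eq, mul_assoc]
  have hdown := (cayleyJoined_self_mul_pow hχ hm hmpos.le hut n).symm
  rw [← hswap] at hdown
  exact (cayleyJoined_self_mul_pow hχ hm hmpos.le hu n).trans ((hN _ hhigh).trans hdown)

theorem closure_setOf_cayleyJoined_one_eq_top (hχ : IsChar χ) (hY : closure Y = ⊤)
    (hne : χ ≠ 0) :    closure {u | CayleyJoined Y χ 1 u} = ⊤ := by
  obtain ⟨m, hm, hmpos⟩ := exists_cayleyJoined_one_pos hχ hY hne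
  refine eq_top_iff.mpr fun a _ => ?_
  obtain ⟨N, hN⟩ := exists_cayleyJoined_self_mul hχ hY a
  obtain ⟨n, hn⟩ := exists_nat_ge (N / χ m)
  have hup : CayleyJoined Y χ 1 (m ^ n) := by
    simpa using cayleyJoined_self_mul_pow hχ hm hmpos.le hχ.map_one.ge n
  have hup' : CayleyJoined Y χ 1 (m ^ n * a) := by
    refine hup.trans (hN _ ?_)
    rw [hχ.map_pow]
    rwa [div_le_iff₀ hmpos] at hn
  have hprod := mul_mem (inv_mem (subset_closure hup)) (subset_closure hup')
  rwa [inv_mul_cancel_left] at hprod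

end CayleyJoined

theorem memSigma1_of_mul_centralizer {χ : G → ℝ} (hχ : IsChar χ) (N : Subgroup G) [N.Normal]
    (hprod : ∀ g, ∃ a ∈ N, ∃ c ∈ Subgroup.centralizer (N : Set G), a * c = g)
    (hN : ∃ a ∈ N, χ a ≠ 0) (hC : ∃ c ∈ Subgroup.centralizer (N : Set G), χ c ≠ 0) :
    MemSigma1 χ := by
  have hcomm : ∀ a ∈ N, ∀ c ∈ Subgroup.centralizer (N : Set G), Commute a c :=
    fun a ha c hc => Subgroup.mem_centralizer_iff.mp hc a ha
  refine memSigma1_of_cayleyJoined_one fun Y hY g hg => ?_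
  obtain ⟨m, hmN, hm, hmpos⟩ := exists_mem_cayleyJoined_one_pos hχ hY hN
  obtain ⟨m', hm'C, hm', hm'pos⟩ := exists_mem_cayleyJoined_one_pos hχ hY hC
  obtain ⟨a, ha, c, hc, rfl⟩ := hprod g
  rcases le_total 0 (χ a) with ha₀ | ha₀
  · have h1a : CayleyJoined Y χ 1 a := by
      simpa using cayleyJoined_mul_of_commute hχ hY hm' hm'pos (hcomm a ha m' hm'C).symm
        hχ.map_one.ge (by simpa using ha₀)
    exact h1a.trans (cayleyJoined_mul_of_commute hχ hY hm hmpos (hcomm m hmN c hc) ha₀ hg)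
  · have hc₀ : 0 ≤ χ c := by rw [hχ] at hg; linarith
    have h1c : CayleyJoined Y χ 1 c := by
      simpa using cayleyJoined_mul_of_commute hχ hY hm hmpos (hcomm m hmN c hc)
        hχ.map_one.ge (by simpa using hc₀)
    rw [(hcomm a ha c hc).eq] at hg ⊢
    exact h1c.trans
      (cayleyJoined_mul_of_commute hχ hY hm' hm'pos (hcomm a ha m' hm'C).symm hc₀ hg)

theorem MemSigma1.of_comp {π : G →* H} (hπ : Function.Surjective π) {χ' : H → ℝ}
    (h : MemSigma1 (χ' ∘ π)) : MemSigma1 χ' := by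
  intro X' hX' a b ha hb
  obtain ⟨a, rfl⟩ := hπ a
  obtain ⟨b, rfl⟩ := hπ b
  have hX : closure (π ⁻¹' insert 1 X') = ⊤ := by
    have hker : π.ker ≤ closure (π ⁻¹' insert 1 X') :=
      fun k hk => subset_closure (by simp [π.mem_ker.mp hk])
    have hmap : map π (closure (π ⁻¹' insert 1 X')) = ⊤ := by
      rw [MonoidHom.map_closure, Set.image_preimage_eq _ hπ, eq_top_iff, ← hX']
      exact closure_mono (Set.subset_insert _ _)
    rw [← sup_eq_left.mpr hker, ← comap_map_eq, hmap, comap_top]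
  refine Relation.ReflTransGen.lift' π (fun u v ⟨hu, hv, x, hx, huv⟩ => ?_) _ _
    (h _ hX a b ha hb)
  rcases hx with hx1 | hx
  · have huv' : π u = π v := by rcases huv with rfl | rfl <;> simp [hx1]
    show Relation.ReflTransGen _ (π u) (π v)
    rw [huv']
  · exact Relation.ReflTransGen.single ⟨hu, hv, π x, hx, by rcases huv with rfl | rfl <;> simp⟩

theorem exists_cayleyJoined_lift {Y : Set G} {χ' : H → ℝ} (hχ' : IsChar χ') {π : G →* H}
    {g : G} {v : H} (hp : CayleyJoined (π '' {u | CayleyJoined Y (χ' ∘ π) 1 u}) χ' (π g) v) :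
    ∃ u, CayleyJoined Y (χ' ∘ π) g u ∧ π u = v := by
  induction hp with
  | refl => exact ⟨g, .refl, rfl⟩
  | @tail _ c _ hbc ih =>
    obtain ⟨u, hgu, rfl⟩ := ih
    obtain ⟨hb, hc, _, ⟨x, hx, rfl⟩, rfl | hbc⟩ := hbc
    · exact ⟨u * x, hgu.trans (cayleyJoined_self_mul (hχ'.comp π) hx hb), map_mul π u x⟩
    · have hux : π (u * x⁻¹) = c := by rw [map_mul, map_inv, hbc, mul_inv_cancel_right]
      refine ⟨u * x⁻¹, hgu.trans ?_, hux⟩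
      have hc' : 0 ≤ (χ' ∘ π) (u * x⁻¹) := by simpa [hux] using hc
      simpa using (cayleyJoined_self_mul (hχ'.comp π) hx hc').symm

theorem MemSigma1.comp {χ' : H → ℝ} (hχ' : IsChar χ') (h : MemSigma1 χ') {π : G →* H}
    (hπ : Function.Surjective π)
    (hC : ∃ c ∈ Subgroup.centralizer (π.ker : Set G), χ' (π c) ≠ 0) :
    MemSigma1 (χ' ∘ π) := by
  have hχ := hχ'.comp π
  refine memSigma1_of_cayleyJoined_one fun Y hY g hg => ?_
  obtain ⟨m, hmC, hm, hmpos⟩ := exists_mem_cayleyJoined_one_pos hχ hY hC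
  have hker : ∀ k ∈ π.ker, CayleyJoined Y (χ' ∘ π) 1 k := fun k hk => by
    have hmk : Commute m k := (Subgroup.mem_centralizer_iff.mp hmC k hk).symm
    simpa using cayleyJoined_mul_of_commute hχ hY hm hmpos hmk hχ.map_one.ge
      (by simp [π.mem_ker.mp hk, hχ'.map_one])
  have hX' : closure (π '' {u | CayleyJoined Y (χ' ∘ π) 1 u}) = ⊤ := by
    have hne : χ' ∘ π ≠ 0 := fun h₀ => hmpos.ne' (congrFun h₀ m)
    rw [← MonoidHom.map_closure, closure_setOf_cayleyJoined_one_eq_top hχ hY hne,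
      map_top_of_surjective π hπ]
  obtain ⟨u, hgu, hu⟩ := exists_cayleyJoined_lift hχ' (h _ hX' (π g) 1 hg hχ'.map_one.ge)
  exact (hker u (π.mem_ker.mpr hu)).trans hgu.symm

end

namespace restrictedProd

variable {ι : Type*} {Gi : ι → Type*} [∀ i, Group (Gi i)]

def eval (i : ι) : restrictedProd Gi →* Gi i :=
  (Pi.evalMonoidHom Gi i).comp (restrictedProd Gi).subtype

@[simp]
theorem eval_apply (i : ι) (g : restrictedProd Gi) : eval i g = (g : ∀ j, Gi j) i := rfl

variable [DecidableEq ι]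

theorem mulSingle_mem (i : ι) (a : Gi i) : Pi.mulSingle i a ∈ restrictedProd Gi :=
  (Set.finite_singleton i).subset fun _ hj =>
    by_contra fun hji => hj (Pi.mulSingle_eq_of_ne hji a)

def single (i : ι) : Gi i →* restrictedProd Gi :=
  (MonoidHom.mulSingle Gi i).codRestrict _ (mulSingle_mem i)

@[simp]
theorem coe_single (i : ι) (a : Gi i) : (single i a : ∀ j, Gi j) = Pi.mulSingle i a := rfl

theorem eval_surjective (i : ι) : Function.Surjective (eval (Gi := Gi) i) :=
  fun a => ⟨single i a, by simp⟩

theorem single_mem_centralizer_ker (i : ι) (a : Gi i) :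
    single i a ∈ Subgroup.centralizer ((eval (Gi := Gi) i).ker : Set (restrictedProd Gi)) := by
  refine Subgroup.mem_centralizer_iff.mpr fun k hk => Subtype.ext <| funext fun j => ?_
  rw [SetLike.mem_coe, MonoidHom.mem_ker, eval_apply] at hk
  rcases eq_or_ne j i with rfl | hji
  · simp [hk]
  · simp [Pi.mulSingle_eq_of_ne hji]

theorem mul_inv_single_eval_mem_ker (i : ι) (g : restrictedProd Gi) :
    g * (single i (eval i g))⁻¹ ∈ (eval i).ker := by
  simp [MonoidHom.mem_ker]

theorem closure_iUnion_range_single :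
    closure (⋃ i, Set.range (single (Gi := Gi) i)) = ⊤ := by
  rw [eq_top_iff]
  rintro g -
  obtain ⟨s, hs⟩ : ∃ s : Finset ι, ∀ j, (g : ∀ j, Gi j) j ≠ 1 → j ∈ s :=
    ⟨g.2.toFinset, fun j hj => g.2.mem_toFinset.mpr hj⟩
  induction s using Finset.induction_on generalizing g with
  | empty =>
    have hg : g = 1 := Subtype.ext <| funext fun j => not_not.mp fun h => by simpa using hs j h
    exact hg ▸ one_mem _
  | insert a s ha ih =>
    have hrest :
        (single a (eval a g))⁻¹ * g ∈ closure (⋃ i, Set.range (single (Gi := Gi) i)) := by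
      refine ih fun j hj => ?_
      rcases eq_or_ne j a with rfl | hja
      · simp at hj
      · simp only [coe_mul, coe_inv, Pi.mul_apply, Pi.inv_apply, coe_single,
          Pi.mulSingle_eq_of_ne hja, inv_one, one_mul] at hj
        exact (Finset.mem_insert.mp (hs j hj)).resolve_left hja
    have hsingle : single a (eval a g) ∈ closure (⋃ i, Set.range (single (Gi := Gi) i)) :=
      subset_closure (Set.mem_iUnion.mpr ⟨a, eval a g, rfl⟩)
    simpa using mul_mem hsingle hrest

variable {χ : restrictedProd Gi → ℝ}

theorem exists_apply_single_ne_zero (hχ : IsChar χ) (hne : χ ≠ 0) :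
    ∃ i a, χ (single i a) ≠ 0 := by
  by_contra! h
  refine hne (hχ.eq_zero_of_closure_eq_top closure_iUnion_range_single ?_)
  simp only [Set.mem_iUnion, Set.mem_range]
  rintro _ ⟨i, a, rfl⟩
  exact h i a

theorem memSigma1_of_ne_zero_on_ker (hχ : IsChar χ) {i : ι} {a : Gi i}
    (ha : χ (single i a) ≠ 0) (hK : ∃ k ∈ (eval i).ker, χ k ≠ 0) : MemSigma1 χ :=
  memSigma1_of_mul_centralizer hχ _
    (fun g => ⟨_, mul_inv_single_eval_mem_ker i g, _, single_mem_centralizer_ker i _,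
      inv_mul_cancel_right _ _⟩)
    hK ⟨_, single_mem_centralizer_ker i a, ha⟩

theorem apply_eq_apply_single_eval (hχ : IsChar χ) {i : ι} (hK : ∀ k ∈ (eval i).ker, χ k = 0)
    (g : restrictedProd Gi) : χ g = χ (single i (eval i g)) :=
  calc χ g = χ (g * (single i (eval i g))⁻¹ * single i (eval i g)) := by
        rw [inv_mul_cancel_right]
    _ = χ (single i (eval i g)) := by
        rw [hχ, hK _ (mul_inv_single_eval_mem_ker i g), zero_add]

theorem memSigma1_of_comp_single (hχ : IsChar χ) {i : ι} {a : Gi i}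
    (ha : χ (single i a) ≠ 0) (hK : ∀ k ∈ (eval i).ker, χ k = 0)
    (h : MemSigma1 (χ ∘ single i)) : MemSigma1 χ := by
  have hfac := apply_eq_apply_single_eval hχ hK
  refine (memSigma1_congr fun g => by rw [hfac g]).mpr ?_
  refine h.comp (hχ.comp (single i)) (eval_surjective i)
    ⟨single i a, single_mem_centralizer_ker i a, ?_⟩
  rwa [hfac] at ha

end restrictedProd

/-- **Corollary (Statement 14).** For the restricted direct product `G = ⨁ G_i`,
a non-zero character `χ` of `G` represents a point of `Σ¹(G)^c` if and only if
`[χ] = [χ̄ ∘ π_i]` for some `i` and some non-zero character `χ̄` of `G_i`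
with `[χ̄] ∉ Σ¹(G_i)`. -/
theorem sigma1_complement_restricted_product
    {ι : Type*} (Gi : ι → Type*) [∀ i, Group (Gi i)]
    (χ : restrictedProd Gi → ℝ) (hχ : IsChar χ) (hne : χ ≠ 0) :
    ¬ MemSigma1 χ ↔
      ∃ i : ι, ∃ χ' : Gi i → ℝ, IsChar χ' ∧ χ' ≠ 0 ∧ ¬ MemSigma1 χ' ∧
        SameRayChar (fun g : restrictedProd Gi => χ' ((g : ∀ j, Gi j) i)) χ := by
  classical
  refine ⟨fun hns => ?_, fun ⟨i, χ', _, _, hns', hray⟩ hmem => hns' ?_⟩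
  · obtain ⟨i, a, ha⟩ := restrictedProd.exists_apply_single_ne_zero hχ hne
    by_cases hK : ∃ k ∈ (restrictedProd.eval i).ker, χ k ≠ 0
    · exact absurd (restrictedProd.memSigma1_of_ne_zero_on_ker hχ ha hK) hns
    push Not at hK
    refine ⟨i, χ ∘ restrictedProd.single i, hχ.comp _, fun h₀ => ha (congrFun h₀ a),
      fun hmem => hns (restrictedProd.memSigma1_of_comp_single hχ ha hK hmem),
      1, one_pos, fun g => ?_⟩
    rw [one_mul, restrictedProd.apply_eq_apply_single_eval hχ hK g]
    rfl
  · exact ((memSigma1_congr hray.nonneg_iff).mpr hmem).of_comp (π := restrictedProd.eval i)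
      (restrictedProd.eval_surjective i)
end
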